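/- Let P be a finite set of ground ASP rules and ⟨P⟩ its translation to a finite-choice logic program. For every stable model X of P, there is a solution D of ⟨P⟩ with X = { p : (p is tt) ∈ D }. -/

import Mathlib

open scoped Classical

namespace FCLP

/-! ### Terms -/

/-- Ground (Herbrand) terms: uninterpreted function symbols applied to ground terms. -/
inductive GTerm : Type where
  | func : ℕ → List GTerm → GTerm

/-- Terms possibly containing variables. -/
inductive VTerm : Type where
  | var : ℕ → VTerm
  | func : ℕ → List VTerm → VTerm

/-- A substitution is a total map from variables to ground terms. -/
abbrev Subst := ℕ → GTerm

mutual
  /-- Applying a substitution to a term. -/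
  def VTerm.subst (σ : Subst) : VTerm → GTerm
    | .var x => σ x
    | .func f args => .func f (VTerm.substList σ args)
  def VTerm.substList (σ : Subst) : List VTerm → List GTerm
    | [] => []
    | t :: ts => VTerm.subst σ t :: VTerm.substList σ ts
end

/-- The variable `x` occurs in the term. -/
inductive VTerm.HasVar : VTerm → ℕ → Prop where
  | var (x : ℕ) : VTerm.HasVar (.var x) x
  | func {f : ℕ} {args : List VTerm} {t : VTerm} {x : ℕ} :
      t ∈ args → VTerm.HasVar t x → VTerm.HasVar (.func f args) x

/-! ### Attributes, facts, rules, programs -/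

/-- An attribute `p(t₁,...,tₙ)`: a predicate applied to ground terms. -/
structure Attr where
  pred : ℕ
  args : List GTerm

/-- A fact `p(t̄) is v`. -/
structure Fact where
  attr : Attr
  value : GTerm

/-- A premise `p(t̄) is v`, possibly containing variables. -/
structure VAtom where
  pred : ℕ
  args : List VTerm
  value : VTerm

def VAtom.subst (σ : Subst) (A : VAtom) : Fact :=
  ⟨⟨A.pred, A.args.map (VTerm.subst σ)⟩, A.value.subst σ⟩

def VAtom.HasVar (A : VAtom) (x : ℕ) : Prop :=
  (∃ t ∈ A.args, t.HasVar x) ∨ A.value.HasVar x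

/-- A rule head: open `p(t̄) is? v` or closed `p(t̄) is {v₁,...,vₘ}`. -/
inductive Head : Type where
  | opn : ℕ → List VTerm → VTerm → Head
  | closed : ℕ → List VTerm → List VTerm → Head

def Head.HasVar : Head → ℕ → Prop
  | .opn _ args v, x => (∃ t ∈ args, t.HasVar x) ∨ v.HasVar x
  | .closed _ args vs, x => (∃ t ∈ args, t.HasVar x) ∨ ∃ v ∈ vs, v.HasVar x

/-- The ground attribute of a rule head under a substitution. -/
def Head.groundAttr (σ : Subst) : Head → Attr
  | .opn p args _ => ⟨p, args.map (VTerm.subst σ)⟩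
  | .closed p args _ => ⟨p, args.map (VTerm.subst σ)⟩

/-- A rule `H ← F` with a finite collection of premises. -/
structure Rule where
  head : Head
  prems : List VAtom

/-- Wellformedness: closed heads offer at least one value, and every
variable in the head occurs in a premise. -/
def Rule.WF (r : Rule) : Prop :=
  (∀ x, r.head.HasVar x → ∃ A ∈ r.prems, A.HasVar x) ∧
  (∀ p args vs, r.head = .closed p args vs → vs ≠ [])

/-- A program is a set of rules. -/
abbrev Program := Set Rule

/-- A program is a *finite* set of *wellformed* rules. -/
def Program.WFP (P : Program) : Prop := P.Finite ∧ ∀ r ∈ P, r.WF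

/-! ### Fact-set semantics -/

/-- A set of facts is consistent when each attribute has at most one value. -/
def Consistent (D : Set Fact) : Prop :=
  ∀ f ∈ D, ∀ g ∈ D, f.attr = g.attr → f = g

/-- `σ` satisfies the premises `F` in the fact-set database `D`. -/
def satF (σ : Subst) (F : List VAtom) (D : Set Fact) : Prop :=
  ∀ A ∈ F, A.subst σ ∈ D

/-- Fact-set evolution `D →_P S`. -/
inductive Evolve (P : Program) : Set Fact → Set (Set Fact) → Prop where
  | triv (D : Set Fact) : Evolve P D {D}
  | closed {D : Set Fact} {r : Rule} {p : ℕ} {args vs : List VTerm} {σ : Subst} :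
      r ∈ P → r.head = .closed p args vs → satF σ r.prems D →
      Evolve P D
        { E | ∃ v ∈ vs,
            E = insert (⟨⟨p, args.map (VTerm.subst σ)⟩, VTerm.subst σ v⟩ : Fact) D ∧
            Consistent E }
  | opn {D : Set Fact} {r : Rule} {p : ℕ} {args : List VTerm} {v : VTerm} {σ : Subst} :
      r ∈ P → r.head = .opn p args v → satF σ r.prems D →
      Evolve P D
        ({D} ∪ { E | E = insert (⟨⟨p, args.map (VTerm.subst σ)⟩, VTerm.subst σ v⟩ : Fact) D ∧
                     Consistent E })

/-- `P` allows `D` to step to `D'`. -/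
def Step (P : Program) (D D' : Set Fact) : Prop := ∃ S, Evolve P D S ∧ D' ∈ S

/-- A database is saturated when its only evolution is the singleton of itself. -/
def Saturated (P : Program) (D : Set Fact) : Prop := ∀ S, Evolve P D S → S = {D}

/-- A solution: a saturated database reachable from `∅` by a (finite) step sequence. -/
def Solution (P : Program) (D : Set Fact) : Prop :=
  Relation.ReflTransGen (Step P) ∅ D ∧ Saturated P D

/-! ### Constraints and constraint databases -/

/-- A constraint: `just t` or `noneOf X`. -/
inductive Constraint : Type where
  | just : GTerm → Constraint
  | noneOf : Set GTerm → Constraint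

/-- The order on constraints. -/
def Constraint.le : Constraint → Constraint → Prop
  | .noneOf X, .noneOf Y => X ⊆ Y
  | .noneOf X, .just t => t ∉ X
  | .just t, .just t' => t = t'
  | .just _, .noneOf _ => False

instance : LE Constraint := ⟨Constraint.le⟩

/-- Least upper bound of a (compatible) set of constraints: if some `just t` is present
it is the lub; otherwise it is `noneOf` of the union. -/
noncomputable def Constraint.lub (C : Set Constraint) : Constraint :=
  if h : ∃ t, Constraint.just t ∈ C then .just h.choose
  else .noneOf (⋃₀ { X | Constraint.noneOf X ∈ C })

/-- A constraint database: a map from ground attributes to constraints,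
ordered pointwise (via the `Pi` order). -/
abbrev CDB := Attr → Constraint

/-- The least constraint database: every attribute maps to `noneOf ∅`. -/
def cdbBot : CDB := fun _ => .noneOf ∅

/-- Pointwise least upper bound of a (compatible) set of constraint databases. -/
noncomputable def CDB.lub (S : Set CDB) : CDB :=
  fun a => Constraint.lub ((fun Δ => Δ a) '' S)

/-- A subset of a poset is compatible when it has an upper bound. -/
def Compatible {α : Type*} [LE α] (X : Set α) : Prop := ∃ y, ∀ x ∈ X, x ≤ y

/-- Binary compatibility. -/
def Compat {α : Type*} [LE α] (x y : α) : Prop := Compatible ({x, y} : Set α)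

/-- A choice set: a pairwise-incompatible set of constraint databases. -/
def IsChoiceSet (𝒞 : Set CDB) : Prop :=
  ∀ D ∈ 𝒞, ∀ E ∈ 𝒞, Compat D E → D = E

/-- The order on choice sets. -/
def ChoiceLE (𝒞₁ 𝒞₂ : Set CDB) : Prop :=
  ∀ D₂ ∈ 𝒞₂, ∃ D₁ ∈ 𝒞₁, D₁ ≤ D₂

/-- Least upper bound of an indexed family of choice sets:
`⋁ᵢ 𝒞ᵢ = { ⋁ Im(f) : f ∈ ∏ᵢ 𝒞ᵢ, Im(f) compatible }`. -/
noncomputable def ChoiceJoin {I : Type*} (𝒞 : I → Set CDB) : Set CDB :=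
  { E | ∃ f : I → CDB, (∀ i, f i ∈ 𝒞 i) ∧ Compatible (Set.range f) ∧
        E = CDB.lub (Set.range f) }

/-- Least upper bound of a set of choice sets. -/
noncomputable def ChoiceSJoin (S : Set (Set CDB)) : Set CDB :=
  ChoiceJoin (fun C : S => (C : Set CDB))

/-- Greatest lower bound of a set of choice sets:
`⋀ X = ⋁ {𝒞 : ∀ x ∈ X, 𝒞 ≤ x}` (join over choice-set lower bounds). -/
noncomputable def ChoiceMeet (S : Set (Set CDB)) : Set CDB :=
  ChoiceSJoin { C | IsChoiceSet C ∧ ∀ X ∈ S, ChoiceLE C X }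

/-! ### Immediate consequence -/

/-- `σ` satisfies `F` in the constraint database `Δ`. -/
def satC (σ : Subst) (F : List VAtom) (Δ : CDB) : Prop :=
  ∀ A ∈ F, Constraint.just (A.value.subst σ) ≤ Δ ⟨A.pred, A.args.map (VTerm.subst σ)⟩

/-- The constraint database mapping `a` to `c` and every other attribute to `noneOf ∅`. -/
noncomputable def unitCDB (a : Attr) (c : Constraint) : CDB :=
  fun a' => if a' = a then c else .noneOf ∅

/-- The choice set `⟨σH⟩` determined by a ground rule head. -/
noncomputable def headChoice (σ : Subst) : Head → Set CDB
  | .opn p args v =>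
      { unitCDB ⟨p, args.map (VTerm.subst σ)⟩ (.just (v.subst σ)),
        unitCDB ⟨p, args.map (VTerm.subst σ)⟩ (.noneOf {v.subst σ}) }
  | .closed p args vs =>
      { Δ | ∃ v ∈ vs, Δ = unitCDB ⟨p, args.map (VTerm.subst σ)⟩ (.just (v.subst σ)) }

/-- The immediate consequence operator
`T_P(Δ) = {Δ} ∨ ⋁{ ⟨σH⟩ : (H ← F) ∈ P, σ satisfies F in Δ }`. -/
noncomputable def TP (P : Program) (Δ : CDB) : Set CDB :=
  ChoiceSJoin
    (insert {Δ} { C | ∃ r ∈ P, ∃ σ : Subst, satC σ r.prems Δ ∧ C = headChoice σ r.head })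

/-- The attribute-specific immediate consequence operator `T_{P[a]}`. -/
noncomputable def TPa (P : Program) (a : Attr) (Δ : CDB) : Set CDB :=
  ChoiceSJoin
    { C | ∃ r ∈ P, ∃ σ : Subst, satC σ r.prems Δ ∧ r.head.groundAttr σ = a ∧
          C = headChoice σ r.head }

/-- The lifted immediate consequence operator `T_P*(𝒞) = ⋃_{Δ ∈ 𝒞} T_P(Δ)`. -/
noncomputable def TPs (P : Program) (𝒞 : Set CDB) : Set CDB :=
  { E | ∃ Δ ∈ 𝒞, E ∈ TP P Δ }

/-- The least fixed point of `T_P*`, defined à la Knaster–Tarski as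
`⋀ {𝒞 : T_P*(𝒞) ≤ 𝒞}`. -/
noncomputable def lfpTPs (P : Program) : Set CDB :=
  ChoiceMeet { C | IsChoiceSet C ∧ ChoiceLE (TPs P C) C }

/-! ### Positive and finite constraint databases, promotion and erasure -/

/-- A constraint database is positive when `noneOf X` only occurs with `X = ∅`. -/
def CDBPositive (Δ : CDB) : Prop := ∀ a X, Δ a = .noneOf X → X = ∅

/-- A constraint database is finite. -/
def CDBFinite (Δ : CDB) : Prop :=
  { a | Δ a ≠ .noneOf ∅ }.Finite ∧ ∀ a X, Δ a = .noneOf X → X.Finite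

/-- Promotion of a (consistent) fact set to a constraint database. -/
noncomputable def promote (D : Set Fact) : CDB :=
  fun a => if h : ∃ v, (⟨a, v⟩ : Fact) ∈ D then .just h.choose else .noneOf ∅

/-- Erasure of a constraint database to a fact set. -/
def eraseCDB (Δ : CDB) : Set Fact := { f | Δ f.attr = .just f.value }

/-! ### The abstract algorithm -/

/-- `P` allows `Δ` to take an algorithmic step to any `Δ' ∈ {Δ} ∨ T_{P[a]}(Δ)`
for some attribute `a`, provided `T_P(Δ) ≠ ∅`. -/
noncomputable def AlgStep (P : Program) (Δ Δ' : CDB) : Prop :=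
  TP P Δ ≠ ∅ ∧ ∃ a : Attr, Δ' ∈ ChoiceSJoin {({Δ} : Set CDB), TPa P a Δ}

/-! ### Datalog -/

/-- A datalog atom, possibly with variables. -/
structure DAtom where
  pred : ℕ
  args : List VTerm

/-- A ground datalog atom. -/
structure GAtom where
  pred : ℕ
  args : List GTerm

def DAtom.subst (σ : Subst) (A : DAtom) : GAtom := ⟨A.pred, A.args.map (VTerm.subst σ)⟩

/-- A datalog rule `p(t̄) ← p₁(t̄₁), ..., pₙ(t̄ₙ)`. -/
structure DRule where
  head : DAtom
  prems : List DAtom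

/-- Every variable of the head appears in a premise. -/
def DRule.WF (r : DRule) : Prop :=
  ∀ x, (∃ t ∈ r.head.args, t.HasVar x) → ∃ A ∈ r.prems, ∃ t ∈ A.args, t.HasVar x

/-- The datalog immediate consequence operator. -/
def dImmCons (P : Set DRule) (X : Set GAtom) : Set GAtom :=
  { g | ∃ r ∈ P, ∃ σ : Subst, (∀ A ∈ r.prems, A.subst σ ∈ X) ∧ g = r.head.subst σ }

/-- The least model of a datalog program: the least fixed point of `dImmCons`. -/
def dModel (P : Set DRule) : Set GAtom := ⋂₀ { X | dImmCons P X ⊆ X }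

/-- Translation of a datalog program to a finite-choice logic program, using the
constant with (fresh) function symbol `u` as the value `unit`. -/
def trDatalog (u : ℕ) (P : Set DRule) : Program :=
  { r | ∃ dr ∈ P,
      r = ⟨Head.closed dr.head.pred dr.head.args [VTerm.func u []],
           dr.prems.map (fun A => ⟨A.pred, A.args, VTerm.func u []⟩)⟩ }

/-! ### Answer set programming -/

/-- A ground ASP rule `p ← p₁,...,pₙ, ¬q₁,...,¬qₘ` over propositional atoms. -/
structure ASPRule where
  head : ℕ
  pos : List ℕ
  neg : List ℕ

/-- One step of the immediate consequence operator of the reduct `P^X`. -/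
def reductCons (P : Set ASPRule) (X : Set ℕ) (Y : Set ℕ) : Set ℕ :=
  { p | ∃ r ∈ P, r.head = p ∧ (∀ q ∈ r.pos, q ∈ Y) ∧ (∀ q ∈ r.neg, q ∉ X) }

/-- The least model of the reduct `P^X`. -/
def reductModel (P : Set ASPRule) (X : Set ℕ) : Set ℕ :=
  ⋂₀ { Y | reductCons P X Y ⊆ Y }

/-- `X` is a stable model of `P` when the least model of the reduct `P^X` equals `X`. -/
def StableModel (P : Set ASPRule) (X : Set ℕ) : Prop := reductModel P X = X

/-- The fresh constant `tt` (as a ground term). -/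
def ttT : GTerm := .func 0 []
/-- The fresh constant `ff` (as a ground term). -/
def ffT : GTerm := .func 1 []
/-- The constant `tt` as a (closed) term of the rule language. -/
def ttV : VTerm := .func 0 []
/-- The constant `ff` as a (closed) term of the rule language. -/
def ffV : VTerm := .func 1 []

/-- The premise `p is tt`. -/
def posPrem (p : ℕ) : VAtom := ⟨p, [], ttV⟩
/-- The premise `q is ff`. -/
def negPrem (q : ℕ) : VAtom := ⟨q, [], ffV⟩

/-- Translation of an ASP program to a finite-choice logic program: each rule
`p ← p₁,...,pₙ, ¬q₁,...,¬qₘ` becomes `m` open rules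
`qⱼ is? ff ← p₁ is tt,...,pₙ is tt, q₁ is ff,...,q_{j-1} is ff` and one closed rule
`p is {tt} ← p₁ is tt,...,pₙ is tt, q₁ is ff,...,qₘ is ff`. -/
def trASP (P : Set ASPRule) : Program :=
  { r | ∃ ar ∈ P,
      (∃ j : Fin ar.neg.length,
        r = ⟨Head.opn (ar.neg.get j) [] ffV,
             ar.pos.map posPrem ++ (ar.neg.take j.val).map negPrem⟩) ∨
      r = ⟨Head.closed ar.head [] [ttV],
           ar.pos.map posPrem ++ ar.neg.map negPrem⟩ }

/-!
Let `F` be the set of atoms `qⱼ` whose open rule fires under `X`: the positive body of the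
rule lies in `X` and none of `q₁, …, qⱼ` does. The candidate `D = {p is tt : p ∈ X} ∪
{q is ff : q ∈ F}` is finite and consistent, and it is saturated because `X` is closed under
the reduct `P^X`. Among the finitely many databases reachable from `∅` inside `D`, take a
maximal one. It absorbs every rule firing whose conclusion lies in `D`; firing the open rules
of a rule from left to right it contains `q is ff` for all `q ∈ F`, and since `X` is the least
model of `P^X` it contains `p is tt` for all `p ∈ X`. Hence it is `D` itself.
-/

lemma Consistent.mono {D E : Set Fact} (hE : Consistent E) (h : D ⊆ E) : Consistent D :=
  fun f hf g hg => hE f (h hf) g (h hg)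

section Evolution

variable {Q : Program} {B D : Set Fact}

def ReachableWithin (Q : Program) (B D : Set Fact) : Prop :=
  Relation.ReflTransGen (Step Q) ∅ D ∧ D ⊆ B

lemma exists_maximal_reachableWithin (Q : Program) (hB : B.Finite) :
    ∃ D, Maximal (ReachableWithin Q B) D :=
  (hB.finite_subsets.subset fun _ hD => hD.2).exists_maximal ⟨∅, .refl, Set.empty_subset B⟩

lemma Maximal.mem_of_step (hD : Maximal (ReachableWithin Q B) D) (hB : Consistent B)
    {f : Fact} (hf : f ∈ B) (hstep : Consistent (insert f D) → Step Q D (insert f D)) :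
    f ∈ D := by
  have hsub : insert f D ⊆ B := Set.insert_subset hf hD.1.2
  have hreach : ReachableWithin Q B (insert f D) := ⟨hD.1.1.tail (hstep (hB.mono hsub)), hsub⟩
  exact hD.2 hreach (Set.subset_insert f D) (Set.mem_insert f D)

lemma step_insert_of_closed {r : Rule} {p : ℕ} {args vs : List VTerm} {v : VTerm} {σ : Subst}
    (hr : r ∈ Q) (hh : r.head = .closed p args vs) (hv : v ∈ vs) (hs : satF σ r.prems D)
    (hc : Consistent (insert (⟨⟨p, args.map (VTerm.subst σ)⟩, v.subst σ⟩ : Fact) D)) :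
    Step Q D (insert (⟨⟨p, args.map (VTerm.subst σ)⟩, v.subst σ⟩ : Fact) D) :=
  ⟨_, .closed hr hh hs, v, hv, rfl, hc⟩

lemma step_insert_of_opn {r : Rule} {p : ℕ} {args : List VTerm} {v : VTerm} {σ : Subst}
    (hr : r ∈ Q) (hh : r.head = .opn p args v) (hs : satF σ r.prems D)
    (hc : Consistent (insert (⟨⟨p, args.map (VTerm.subst σ)⟩, v.subst σ⟩ : Fact) D)) :
    Step Q D (insert (⟨⟨p, args.map (VTerm.subst σ)⟩, v.subst σ⟩ : Fact) D) :=
  ⟨_, .opn hr hh hs, Or.inr ⟨rfl, hc⟩⟩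

lemma saturated_of_consistent (hD : Consistent D)
    (hclosed : ∀ r ∈ Q, ∀ p args vs σ, r.head = .closed p args vs → satF σ r.prems D →
      ∃ v ∈ vs, (⟨⟨p, args.map (VTerm.subst σ)⟩, v.subst σ⟩ : Fact) ∈ D)
    (hopn : ∀ r ∈ Q, ∀ p args v σ, r.head = .opn p args v → satF σ r.prems D →
      Consistent (insert (⟨⟨p, args.map (VTerm.subst σ)⟩, v.subst σ⟩ : Fact) D) →
      (⟨⟨p, args.map (VTerm.subst σ)⟩, v.subst σ⟩ : Fact) ∈ D) :
    Saturated Q D := by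
  intro S hS
  cases hS with
  | triv => rfl
  | closed hr hh hs =>
    obtain ⟨v, hv, hvD⟩ := hclosed _ hr _ _ _ _ hh hs
    ext E
    constructor
    · rintro ⟨w, -, rfl, hc⟩
      -- in a consistent extension the new value must agree with the value already in `D`
      rw [hc _ (Set.mem_insert _ D) _ (Set.mem_insert_of_mem _ hvD) rfl, Set.insert_eq_of_mem hvD]
      rfl
    · rintro rfl
      exact ⟨v, hv, (Set.insert_eq_of_mem hvD).symm, hD⟩
  | opn hr hh hs =>
    ext E
    constructor
    · rintro (hE | ⟨rfl, hc⟩)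
      · exact hE
      · exact Set.insert_eq_of_mem (hopn _ hr _ _ _ _ hh hs hc)
    · exact Or.inl

end Evolution

section Translation

variable {P : Set ASPRule} {X : Set ℕ} {D : Set Fact}

def ttFact (p : ℕ) : Fact := ⟨⟨p, []⟩, ttT⟩

def ffFact (q : ℕ) : Fact := ⟨⟨q, []⟩, ffT⟩

lemma ttFact_injective : Function.Injective ttFact := by
  intro p q h
  simpa [ttFact] using h

lemma ffFact_injective : Function.Injective ffFact := by
  intro p q h
  simpa [ffFact] using h

lemma ttFact_ne_ffFact (p q : ℕ) : ttFact p ≠ ffFact q := by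
  simp [ttFact, ffFact, ttT, ffT]

lemma satF_translated {σ : Subst} {pos neg : List ℕ} :
    satF σ (pos.map posPrem ++ neg.map negPrem) D ↔
      (∀ p ∈ pos, ttFact p ∈ D) ∧ ∀ q ∈ neg, ffFact q ∈ D := by
  simp only [satF, List.forall_mem_append, List.forall_mem_map]
  rfl

lemma step_insert_ttFact {ar : ASPRule} (har : ar ∈ P)
    (hs : (∀ p ∈ ar.pos, ttFact p ∈ D) ∧ ∀ q ∈ ar.neg, ffFact q ∈ D)
    (hc : Consistent (insert (ttFact ar.head) D)) :
    Step (trASP P) D (insert (ttFact ar.head) D) :=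
  step_insert_of_closed (Q := trASP P) (σ := fun _ => ttT)
    (r := ⟨.closed ar.head [] [ttV], ar.pos.map posPrem ++ ar.neg.map negPrem⟩)
    ⟨ar, har, Or.inr rfl⟩ rfl
    (List.mem_singleton_self ttV) (satF_translated.2 hs) hc

lemma step_insert_ffFact {ar : ASPRule} (har : ar ∈ P) (j : Fin ar.neg.length)
    (hs : (∀ p ∈ ar.pos, ttFact p ∈ D) ∧ ∀ q ∈ ar.neg.take j, ffFact q ∈ D)
    (hc : Consistent (insert (ffFact (ar.neg.get j)) D)) :
    Step (trASP P) D (insert (ffFact (ar.neg.get j)) D) :=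
  step_insert_of_opn (Q := trASP P) (σ := fun _ => ttT)
    (r := ⟨.opn (ar.neg.get j) [] ffV, ar.pos.map posPrem ++ (ar.neg.take j).map negPrem⟩)
    ⟨ar, har, Or.inl ⟨j, rfl⟩⟩ rfl
    (satF_translated.2 hs) hc

def reductConsHom (P : Set ASPRule) (X : Set ℕ) : Set ℕ →o Set ℕ where
  toFun := reductCons P X
  monotone' _ _ hYZ _ := fun ⟨r, hr, hh, hpos, hneg⟩ =>
    ⟨r, hr, hh, fun q hq => hYZ (hpos q hq), hneg⟩

lemma reductModel_eq_lfp : reductModel P X = (reductConsHom P X).lfp := rfl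

lemma StableModel.subset_of_reductCons_subset (hX : StableModel P X) {Y : Set ℕ}
    (hY : reductCons P X Y ⊆ Y) : X ⊆ Y := by
  rw [← hX, reductModel_eq_lfp]
  exact OrderHom.lfp_le _ hY

lemma StableModel.reductCons_subset (hX : StableModel P X) : reductCons P X X ⊆ X := by
  have h := (reductConsHom P X).map_lfp
  rw [← reductModel_eq_lfp, hX] at h
  exact h.le

lemma StableModel.subset_heads (hX : StableModel P X) : X ⊆ ASPRule.head '' P :=
  hX.subset_of_reductCons_subset fun _ ⟨ar, har, hh, _⟩ => ⟨ar, har, hh⟩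

def forcedFalse (P : Set ASPRule) (X : Set ℕ) : Set ℕ :=
  {q | ∃ ar ∈ P, ∃ j : Fin ar.neg.length, ar.neg.get j = q ∧
      (∀ p ∈ ar.pos, p ∈ X) ∧ (∀ x ∈ ar.neg.take j, x ∉ X) ∧ q ∉ X}

lemma notMem_of_mem_forcedFalse {q : ℕ} (hq : q ∈ forcedFalse P X) : q ∉ X := by
  obtain ⟨-, -, -, -, -, -, hq⟩ := hq
  exact hq

lemma forcedFalse_subset_negs : forcedFalse P X ⊆ ⋃ ar ∈ P, {q | q ∈ ar.neg} := by
  rintro _ ⟨ar, har, j, rfl, -⟩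
  exact Set.mem_biUnion har (ar.neg.get_mem j)

def candidate (P : Set ASPRule) (X : Set ℕ) : Set Fact :=
  ttFact '' X ∪ ffFact '' forcedFalse P X

lemma ttFact_mem_candidate {p : ℕ} : ttFact p ∈ candidate P X ↔ p ∈ X := by
  simp [candidate, ttFact_injective.eq_iff, (ttFact_ne_ffFact _ _).symm]

lemma ffFact_mem_candidate {q : ℕ} : ffFact q ∈ candidate P X ↔ q ∈ forcedFalse P X := by
  simp [candidate, ffFact_injective.eq_iff, ttFact_ne_ffFact]

lemma candidate_consistent : Consistent (candidate P X) := by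
  rintro _ (⟨p, hp, rfl⟩ | ⟨p, hp, rfl⟩) _ (⟨q, hq, rfl⟩ | ⟨q, hq, rfl⟩) hattr <;>
    obtain rfl : p = q := by simpa [ttFact, ffFact] using hattr
  · rfl
  · exact absurd hp (notMem_of_mem_forcedFalse hq)
  · exact absurd hq (notMem_of_mem_forcedFalse hp)
  · rfl

lemma candidate_finite (hfin : P.Finite) (hX : StableModel P X) : (candidate P X).Finite :=
  (((hfin.image _).subset hX.subset_heads).image _).union
    (((hfin.biUnion fun ar _ => ar.neg.finite_toSet).subset forcedFalse_subset_negs).image _)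

lemma candidate_saturated (hX : StableModel P X) : Saturated (trASP P) (candidate P X) := by
  refine saturated_of_consistent candidate_consistent ?_ ?_
  · rintro _ ⟨ar, har, ⟨j, rfl⟩ | rfl⟩ p args vs σ hh hs <;> cases hh
    obtain ⟨hpos, hneg⟩ := satF_translated.1 hs
    refine ⟨ttV, List.mem_singleton_self ttV, ttFact_mem_candidate.2 ?_⟩
    exact hX.reductCons_subset ⟨ar, har, rfl, fun p hp => ttFact_mem_candidate.1 (hpos p hp),
      fun q hq => notMem_of_mem_forcedFalse (ffFact_mem_candidate.1 (hneg q hq))⟩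
  · rintro _ ⟨ar, har, ⟨j, rfl⟩ | rfl⟩ p args v σ hh hs hc <;> cases hh
    obtain ⟨hpos, hneg⟩ := satF_translated.1 hs
    refine ffFact_mem_candidate.2 ⟨ar, har, j, rfl,
      fun p hp => ttFact_mem_candidate.1 (hpos p hp),
      fun q hq => notMem_of_mem_forcedFalse (ffFact_mem_candidate.1 (hneg q hq)), fun hjX => ?_⟩
    have htt : ttFact (ar.neg.get j) ∈ candidate P X := ttFact_mem_candidate.2 hjX
    exact ttFact_ne_ffFact _ _ (hc _ (Set.mem_insert_of_mem _ htt) _ (Set.mem_insert _ _) rfl)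

lemma ffFact_mem_of_maximal
    (hD : Maximal (ReachableWithin (trASP P) (candidate P X)) D)
    {ar : ASPRule} (har : ar ∈ P) (hpos : ∀ p ∈ ar.pos, ttFact p ∈ D)
    {k : ℕ} (hk : k ≤ ar.neg.length) (hneg : ∀ q ∈ ar.neg.take k, q ∉ X) :
    ∀ q ∈ ar.neg.take k, ffFact q ∈ D := by
  induction k with
  | zero => simp
  | succ k ih =>
    rw [← List.take_concat_get' _ _ hk, List.forall_mem_append, List.forall_mem_singleton]
      at hneg ⊢
    have hprev := ih (Nat.le_of_succ_le hk) hneg.1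
    have hforced : ar.neg.get ⟨k, hk⟩ ∈ forcedFalse P X :=
      ⟨ar, har, ⟨k, hk⟩, rfl, fun p hp => ttFact_mem_candidate.1 (hD.1.2 (hpos p hp)),
        hneg.1, hneg.2⟩
    exact ⟨hprev, Maximal.mem_of_step hD candidate_consistent (ffFact_mem_candidate.2 hforced)
      (step_insert_ffFact har ⟨k, hk⟩ ⟨hpos, hprev⟩)⟩

lemma subset_ttFact_of_maximal (hX : StableModel P X)
    (hD : Maximal (ReachableWithin (trASP P) (candidate P X)) D) : X ⊆ {p | ttFact p ∈ D} := by
  refine hX.subset_of_reductCons_subset ?_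
  rintro _ ⟨ar, har, rfl, hpos, hneg⟩
  have hposX : ∀ p ∈ ar.pos, p ∈ X := fun p hp => ttFact_mem_candidate.1 (hD.1.2 (hpos p hp))
  have hff := ffFact_mem_of_maximal hD har hpos le_rfl (by rwa [List.take_length])
  rw [List.take_length] at hff
  exact Maximal.mem_of_step hD candidate_consistent
    (ttFact_mem_candidate.2 (hX.reductCons_subset ⟨ar, har, rfl, hposX, hneg⟩))
    (step_insert_ttFact har ⟨hpos, hff⟩)

lemma eq_candidate_of_maximal (hX : StableModel P X)
    (hD : Maximal (ReachableWithin (trASP P) (candidate P X)) D) : D = candidate P X := by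
  have hXD := subset_ttFact_of_maximal hX hD
  refine hD.1.2.antisymm (Set.union_subset ?_ ?_)
  · rintro _ ⟨p, hp, rfl⟩
    exact hXD hp
  · rintro _ ⟨_, ⟨ar, har, j, rfl, hpos, hprev, hj⟩, rfl⟩
    have hneg : ∀ q ∈ ar.neg.take (j + 1), q ∉ X := by
      rw [← List.take_concat_get' _ _ j.isLt, List.forall_mem_append, List.forall_mem_singleton]
      exact ⟨hprev, hj⟩
    refine ffFact_mem_of_maximal hD har (fun p hp => hXD (hpos p hp)) j.isLt hneg _ ?_
    rw [← List.take_concat_get' _ _ j.isLt]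
    exact List.mem_append_right _ (List.mem_singleton_self _)

end Translation

/-- Soundness of the ASP translation: every stable model of `P` arises from a
solution of `⟨P⟩`. -/
theorem asp_translation_sound (P : Set ASPRule) (hfin : P.Finite) (X : Set ℕ)
    (hX : StableModel P X) :
    ∃ D : Set Fact, Solution (trASP P) D ∧
      X = { p | (⟨⟨p, []⟩, ttT⟩ : Fact) ∈ D } := by
  obtain ⟨D, hD⟩ := exists_maximal_reachableWithin (trASP P) (candidate_finite hfin hX)
  obtain rfl := eq_candidate_of_maximal hX hD
  refine ⟨_, ⟨hD.1.1, candidate_saturated hX⟩, ?_⟩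
  ext p
  exact ttFact_mem_candidate.symm

end FCLP
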